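/- Two images A and B of size k × m over Z_n (with k, m ≥ 1) are strongly equivalent if and only if their natural entropy distance vanishes: there exists a scalar image S with A = S + B if and only if ν̂(A, B) = E(A + (−B)) = 0, where −B is the pixel-wise additive inverse of B in Z_n. -/

import Mathlib

/-!
Each term `-p log₂ p` of the entropy is nonnegative for `p ∈ [0, 1]` and vanishes only at
`p = 0` and `p = 1`, so an image has entropy zero exactly when a single gray level covers every
pixel. And `A + (-B)` is constant exactly when `A` is a constant shift of `B`.
-/

open Finset Real

/-- The fraction of pixels of the image `A` (of size `k × m`, with values in `ZMod n`)
having gray level `x`. -/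
noncomputable def pixelProb (k m n : ℕ) (A : Fin k × Fin m → ZMod n) (x : ZMod n) : ℝ :=
  ((Finset.univ.filter (fun p => A p = x)).card : ℝ) / (k * m)

/-- The entropy of an image `A : Fin k × Fin m → ZMod n`, with the convention
`0 * log₂ 0 = 0` (automatic since `Real.logb` of `0` is multiplied by `0`). -/
noncomputable def entropy (k m n : ℕ) [NeZero n] (A : Fin k × Fin m → ZMod n) : ℝ :=
  -∑ x : ZMod n, pixelProb k m n A x * Real.logb 2 (pixelProb k m n A x)

lemma Real.mul_logb_eq_zero_iff {b x : ℝ} (hb : 1 < b) (hx : 0 ≤ x) :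
    x * logb b x = 0 ↔ x = 0 ∨ x = 1 := by
  rw [mul_eq_zero, logb_eq_zero]
  constructor
  · rintro (h | h | h | h | h | h | h) <;> first | tauto | linarith
  · rintro (h | h) <;> simp [h]

lemma exists_const_add_iff_add_neg_const {ι G : Type*} [AddGroup G] (A B : ι → G) :
    (∃ S : ι → G, (∃ c : G, ∀ p, S p = c) ∧ A = fun p => S p + B p) ↔
      ∃ c : G, ∀ p, A p + -B p = c := by
  constructor
  · rintro ⟨S, ⟨c, hS⟩, rfl⟩
    exact ⟨c, fun p => by rw [add_neg_cancel_right, hS]⟩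
  · rintro ⟨c, hc⟩
    exact ⟨fun _ => c, ⟨c, fun _ => rfl⟩, funext fun p => add_neg_eq_iff_eq_add.1 (hc p)⟩

section PixelProb

variable {k m n : ℕ} (A : Fin k × Fin m → ZMod n) (x : ZMod n)

lemma pixelProb_nonneg : 0 ≤ pixelProb k m n A x := by
  unfold pixelProb
  positivity

lemma pixelProb_le_one : pixelProb k m n A x ≤ 1 := by
  refine div_le_one_of_le₀ ?_ (by positivity)
  calc ((univ.filter fun p => A p = x).card : ℝ)
      ≤ (univ : Finset (Fin k × Fin m)).card := by exact_mod_cast card_filter_le _ _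
    _ = k * m := by simp

lemma pixelProb_eq_zero_iff : pixelProb k m n A x = 0 ↔ ∀ p, A p ≠ x := by
  simp only [pixelProb, div_eq_zero_iff, Nat.cast_eq_zero, card_eq_zero, filter_eq_empty_iff,
    mem_univ, true_implies]
  refine or_iff_left_of_imp fun hkm p => ?_
  rcases mul_eq_zero.1 hkm with h | h <;> norm_cast at h <;> subst h
  exacts [p.1.elim0, p.2.elim0]

lemma pixelProb_eq_one_iff (hk : 0 < k) (hm : 0 < m) :
    pixelProb k m n A x = 1 ↔ ∀ p, A p = x := by
  have hcard : ((univ : Finset (Fin k × Fin m)).card : ℝ) = k * m := by simp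
  rw [pixelProb, div_eq_one_iff_eq (by positivity), ← hcard, Nat.cast_inj, card_filter_eq_iff]
  simp only [mem_univ, true_implies]

end PixelProb

lemma entropy_eq_zero_iff {k m n : ℕ} [NeZero n] (A : Fin k × Fin m → ZMod n) :
    entropy k m n A = 0 ↔ ∀ x, pixelProb k m n A x = 0 ∨ pixelProb k m n A x = 1 := by
  have hterm_nonpos : ∀ x ∈ (univ : Finset (ZMod n)),
      pixelProb k m n A x * logb 2 (pixelProb k m n A x) ≤ 0 := fun x _ =>
    mul_nonpos_of_nonneg_of_nonpos (pixelProb_nonneg A x)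
      (logb_nonpos one_lt_two (pixelProb_nonneg A x) (pixelProb_le_one A x))
  rw [entropy, neg_eq_zero, sum_eq_zero_iff_of_nonpos hterm_nonpos]
  simp only [mem_univ, true_implies, mul_logb_eq_zero_iff one_lt_two (pixelProb_nonneg A _)]

lemma entropy_eq_zero_iff_exists_const {k m n : ℕ} [NeZero n] (hk : 0 < k) (hm : 0 < m)
    (A : Fin k × Fin m → ZMod n) :
    entropy k m n A = 0 ↔ ∃ c, ∀ p, A p = c := by
  rw [entropy_eq_zero_iff]
  constructor
  · intro h
    let p₀ : Fin k × Fin m := (⟨0, hk⟩, ⟨0, hm⟩)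
    have hne : pixelProb k m n A (A p₀) ≠ 0 := by
      rw [Ne, pixelProb_eq_zero_iff, not_forall_not]
      exact ⟨p₀, rfl⟩
    exact ⟨A p₀, (pixelProb_eq_one_iff A _ hk hm).1 ((h _).resolve_left hne)⟩
  · rintro ⟨c, hc⟩ x
    by_cases hx : x = c
    · exact Or.inr ((pixelProb_eq_one_iff A x hk hm).2 fun p => by rw [hc, hx])
    · exact Or.inl ((pixelProb_eq_zero_iff A x).2 fun p => by rw [hc]; exact Ne.symm hx)

/-- Two images are strongly equivalent if and only if their natural entropy
distance `ν̂(A, B) = E(A + (−B))` vanishes. -/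
theorem strong_equiv_iff_natural_entropy_distance_eq_zero (k m n : ℕ) [NeZero n]
    (hk : 0 < k) (hm : 0 < m) (A B : Fin k × Fin m → ZMod n) :
    (∃ S : Fin k × Fin m → ZMod n, (∃ c : ZMod n, ∀ p, S p = c) ∧
      A = fun p => S p + B p) ↔
    entropy k m n (fun p => A p + (-(B p))) = 0 := by
  rw [entropy_eq_zero_iff_exists_const hk hm, exists_const_add_iff_add_neg_const]
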